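/- Binomial approximation of 2X/3 is linearly bad (Proposition 4.6): Let X ~ Bin(3n, 1/2) and Y ~ Bin(2n, p) for some p ∈ [0,1]. Then there exists a constant C_p > 0, depending only on p, such that for all sufficiently large n, W_∞(2X/3, Y) ≥ C_p · n, where W_∞ denotes the ∞-Wasserstein distance. -/

import Mathlib

open scoped BigOperators
open MeasureTheory

/-- The binomial probability mass function `Bin(m, p)`. -/
noncomputable def binPMF (m : ℕ) (p : ℝ) (k : ℕ) : ℝ :=
  (m.choose k : ℝ) * p ^ k * (1 - p) ^ (m - k)

/-- The law of `(2/3) X` on ℝ for `X ~ Bin(3n, 1/2)`. -/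
noncomputable def lawTwoThirdsBin (n : ℕ) : Measure ℝ :=
  Measure.sum fun k : ℕ =>
    ENNReal.ofReal (binPMF (3 * n) (1 / 2) k) • Measure.dirac (2 * (k : ℝ) / 3)

/-- The law of `Y ~ Bin(2n, p)` as a measure on ℝ. -/
noncomputable def lawBin (n : ℕ) (p : ℝ) : Measure ℝ :=
  Measure.sum fun k : ℕ =>
    ENNReal.ofReal (binPMF (2 * n) p k) • Measure.dirac (k : ℝ)

/-- The `∞`-Wasserstein distance: `W_∞(μ, ν)` is the infimum over all couplings `γ`
of `μ` and `ν` of the `γ`-essential supremum of `|x - y|`. -/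
noncomputable def wassersteinInf (μ ν : Measure ℝ) : ENNReal :=
  ⨅ (γ : Measure (ℝ × ℝ)) (_ : IsProbabilityMeasure γ)
    (_ : γ.map Prod.fst = μ) (_ : γ.map Prod.snd = ν),
      essSup (fun z : ℝ × ℝ => ENNReal.ofReal |z.1 - z.2|) γ

/-! The law of `Y` has an atom of mass at least `4⁻ⁿ` at an endpoint of `[0, 2n]`: `p ^ (2n)` at
`2n` or `(1 - p) ^ (2n)` at `0`. A coupling with `|2X/3 - Y| < cn` almost surely must carry that
atom into the `cn`-ball around the endpoint, to which `2X/3` gives mass at most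
`8 ^ (cn) * (125/512) ^ n` by a Chernoff bound with parameter `± log 4`. For small `c` this is
less than `4⁻ⁿ`. -/

open Real Metric Filter Topology

lemma exists_pos_exp_mul_lt (a : ℝ) {q s : ℝ} (h : q < s) : ∃ c > 0, exp (a * c) * q < s := by
  have hcont : ContinuousAt (fun c => exp (a * c) * q) 0 := by fun_prop
  have hnear : ∀ᶠ c in 𝓝[>] 0, exp (a * c) * q < s :=
    nhdsWithin_le_nhds (hcont.eventually (gt_mem_nhds (by simpa using h)))
  obtain ⟨c, hlt, hc⟩ := (hnear.and self_mem_nhdsWithin).exists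
  exact ⟨c, hc, hlt⟩

lemma wassersteinInf_le_swap (μ ν : Measure ℝ) :
    wassersteinInf ν μ ≤ wassersteinInf μ ν := by
  refine le_iInf₂ fun γ _ => le_iInf₂ fun hfst hsnd => ?_
  have hswap : MeasurableEmbedding (Prod.swap : ℝ × ℝ → ℝ × ℝ) :=
    MeasurableEquiv.prodComm.measurableEmbedding
  refine iInf₂_le_of_le (γ.map Prod.swap)
    (Measure.isProbabilityMeasure_map measurable_swap.aemeasurable)
    (iInf₂_le_of_le ?_ ?_ (le_of_eq ?_))
  · rw [Measure.map_map measurable_fst measurable_swap]; exact hsnd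
  · rw [Measure.map_map measurable_snd measurable_swap]; exact hfst
  · rw [hswap.essSup_map_measure]
    congr 1
    ext z
    simp [abs_sub_comm]

lemma wassersteinInf_comm (μ ν : Measure ℝ) : wassersteinInf μ ν = wassersteinInf ν μ :=
  le_antisymm (wassersteinInf_le_swap ν μ) (wassersteinInf_le_swap μ ν)

lemma le_wassersteinInf_of_measure_ball_lt {μ ν : Measure ℝ} {a r : ℝ}
    (h : ν (ball a r) < μ {a}) : ENNReal.ofReal r ≤ wassersteinInf μ ν := by
  refine le_iInf₂ fun γ _ => le_iInf₂ fun hfst hsnd => ?_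
  by_contra! hlt
  have hclose : ∀ᵐ z ∂γ, z.1 = a → z.2 ∈ ball a r := by
    filter_upwards [ENNReal.ae_le_essSup (fun z : ℝ × ℝ => ENNReal.ofReal |z.1 - z.2|)]
      with z hz rfl
    rw [mem_ball, dist_comm, Real.dist_eq]
    exact (ENNReal.ofReal_lt_ofReal_iff_of_nonneg (abs_nonneg _)).1 (hz.trans_lt hlt)
  have hmass : μ {a} ≤ ν (ball a r) := by
    rw [← hfst, ← hsnd, Measure.map_apply measurable_fst (measurableSet_singleton a),
      Measure.map_apply measurable_snd measurableSet_ball]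
    exact measure_mono_ae hclose
  exact hmass.not_gt h

lemma binPMF_nonneg {m : ℕ} {p : ℝ} (hp0 : 0 ≤ p) (hp1 : p ≤ 1) (k : ℕ) :
    0 ≤ binPMF m p k := by
  have : 0 ≤ 1 - p := by linarith
  unfold binPMF
  positivity

lemma binPMF_of_lt {m k : ℕ} (h : m < k) (p : ℝ) : binPMF m p k = 0 := by
  simp [binPMF, Nat.choose_eq_zero_of_lt h]

lemma sum_binPMF_mul_pow (m : ℕ) (p t : ℝ) :
    ∑ k ∈ Finset.range (m + 1), binPMF m p k * t ^ k = (1 - p + p * t) ^ m := by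
  rw [show 1 - p + p * t = p * t + (1 - p) by ring, add_pow]
  refine Finset.sum_congr rfl fun k _ => ?_
  rw [binPMF, mul_pow]
  ring

/-- The law of `f K` for `K ~ Bin(m, p)`; `lawBin` and `lawTwoThirdsBin` are instances. -/
noncomputable def binomialLaw (m : ℕ) (p : ℝ) (f : ℕ → ℝ) : Measure ℝ :=
  Measure.sum fun k : ℕ => ENNReal.ofReal (binPMF m p k) • Measure.dirac (f k)

lemma binomialLaw_apply (m : ℕ) (p : ℝ) (f : ℕ → ℝ) {S : Set ℝ} (hS : MeasurableSet S) :
    binomialLaw m p f S =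
      ∑' k, (f ⁻¹' S).indicator (fun k => ENNReal.ofReal (binPMF m p k)) k := by
  rw [binomialLaw, Measure.sum_apply _ hS]
  refine tsum_congr fun k => ?_
  by_cases hk : f k ∈ S <;> simp [hk]

lemma binomialLaw_singleton (m : ℕ) (p : ℝ) {f : ℕ → ℝ} (hf : f.Injective) (j : ℕ) :
    binomialLaw m p f {f j} = ENNReal.ofReal (binPMF m p j) := by
  rw [binomialLaw_apply _ _ _ (measurableSet_singleton _), ← Set.image_singleton,
    hf.preimage_image, tsum_eq_single j fun k hk => by simp [hk]]
  simp

/-- Chernoff bound; `l < 0` bounds lower tails. -/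
lemma binomialLaw_le_exp_mul {m : ℕ} {p : ℝ} (hp0 : 0 ≤ p) (hp1 : p ≤ 1) (f : ℕ → ℝ)
    {S : Set ℝ} (hS : MeasurableSet S) (l b : ℝ) (hSb : ∀ k, f k ∈ S → l * b ≤ l * k) :
    binomialLaw m p f S ≤ ENNReal.ofReal (exp (-(l * b)) * (1 - p + p * exp l) ^ m) := by
  have hweight : ∀ k : ℕ, 0 ≤ binPMF m p k * exp (l * (k - b)) := fun k =>
    mul_nonneg (binPMF_nonneg hp0 hp1 k) (exp_pos _).le
  calc binomialLaw m p f S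
      = ∑' k, (f ⁻¹' S).indicator (fun k => ENNReal.ofReal (binPMF m p k)) k :=
        binomialLaw_apply m p f hS
    _ ≤ ∑' k : ℕ, ENNReal.ofReal (binPMF m p k * exp (l * (k - b))) := by
        refine ENNReal.tsum_le_tsum fun k => ?_
        by_cases hk : f k ∈ S
        · rw [Set.indicator_of_mem (Set.mem_preimage.2 hk)]
          refine ENNReal.ofReal_le_ofReal (le_mul_of_one_le_right (binPMF_nonneg hp0 hp1 k) ?_)
          exact one_le_exp (by nlinarith [hSb k hk])
        · simp [hk]
    _ = ENNReal.ofReal (∑ k ∈ Finset.range (m + 1), binPMF m p k * exp (l * (k - b))) := by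
        rw [tsum_eq_sum fun k hk => ?_, ENNReal.ofReal_sum_of_nonneg fun k _ => hweight k]
        rw [binPMF_of_lt (by simpa using hk), zero_mul, ENNReal.ofReal_zero]
    _ = ENNReal.ofReal (exp (-(l * b)) * (1 - p + p * exp l) ^ m) := by
        rw [← sum_binPMF_mul_pow, Finset.mul_sum]
        refine congrArg _ (Finset.sum_congr rfl fun k _ => ?_)
        rw [← exp_nat_mul, mul_left_comm, ← exp_add]
        ring_nf

lemma exists_lawBin_singleton_ge (n : ℕ) (p : ℝ) :
    ∃ e : ℝ, (e = 0 ∨ e = 2 * n) ∧ ENNReal.ofReal ((1 / 4) ^ n) ≤ lawBin n p {e} := by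
  rcases le_total p (1 / 2) with hp | hp
  · refine ⟨0, Or.inl rfl, ?_⟩
    have hatom := binomialLaw_singleton (2 * n) p Nat.cast_injective 0
    rw [Nat.cast_zero] at hatom
    rw [lawBin, ← binomialLaw, hatom, binPMF, Nat.choose_zero_right, Nat.sub_zero, pow_mul]
    refine ENNReal.ofReal_le_ofReal ?_
    simpa using pow_le_pow_left₀ (by norm_num) (show (1 / 4 : ℝ) ≤ (1 - p) ^ 2 by nlinarith) n
  · refine ⟨2 * n, Or.inr rfl, ?_⟩
    have hatom := binomialLaw_singleton (2 * n) p Nat.cast_injective (2 * n)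
    rw [Nat.cast_mul, Nat.cast_two] at hatom
    rw [lawBin, ← binomialLaw, hatom, binPMF, Nat.choose_self, Nat.sub_self, pow_mul]
    refine ENNReal.ofReal_le_ofReal ?_
    simpa using pow_le_pow_left₀ (by norm_num) (show (1 / 4 : ℝ) ≤ p ^ 2 by nlinarith) n

lemma lawTwoThirdsBin_ball_le {n : ℕ} {e : ℝ} (he : e = 0 ∨ e = 2 * n) (r : ℝ) :
    lawTwoThirdsBin n (ball e r) ≤
      ENNReal.ofReal (exp (log 4 * (3 / 2 * r)) * (125 / 512) ^ n) := by
  have hlog : 0 < log 4 := log_pos (by norm_num)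
  have h4 : exp (log 4) = 4 := exp_log (by norm_num)
  rcases he with rfl | rfl
  · refine (binomialLaw_le_exp_mul (m := 3 * n) (by norm_num) (by norm_num) _ measurableSet_ball
      (-log 4) (3 / 2 * r) fun k hk => ?_).trans_eq ?_
    · rw [mem_ball, Real.dist_eq, sub_zero, abs_lt] at hk
      nlinarith
    · rw [neg_mul, neg_neg, exp_neg, h4, pow_mul]
      norm_num
  · refine (binomialLaw_le_exp_mul (m := 3 * n) (by norm_num) (by norm_num) _ measurableSet_ball
      (log 4) (3 * n - 3 / 2 * r) fun k hk => ?_).trans_eq ?_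
    · rw [mem_ball, Real.dist_eq, abs_lt] at hk
      nlinarith
    · rw [show -(log 4 * (3 * n - 3 / 2 * r)) = log 4 * (3 / 2 * r) + (3 * n : ℕ) * -log 4 by
          push_cast; ring, exp_add, exp_nat_mul, exp_neg, h4, mul_assoc, ← mul_pow, pow_mul]
      norm_num

theorem binomial_approx_linearly_bad_general (p : ℝ) :
    ∃ C : ℝ, 0 < C ∧ ∃ N : ℕ, ∀ n : ℕ, N ≤ n →
      ENNReal.ofReal (C * n) ≤ wassersteinInf (lawTwoThirdsBin n) (lawBin n p) := by
  obtain ⟨c, hc, hρ⟩ :=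
    exists_pos_exp_mul_lt (log 4 * (3 / 2)) (show (125 / 512 : ℝ) < 1 / 4 by norm_num)
  refine ⟨c, hc, 1, fun n hn => ?_⟩
  obtain ⟨e, he, hatom⟩ := exists_lawBin_singleton_ge n p
  rw [wassersteinInf_comm]
  refine le_wassersteinInf_of_measure_ball_lt
    ((lawTwoThirdsBin_ball_le he _).trans_lt (lt_of_lt_of_le ?_ hatom))
  rw [ENNReal.ofReal_lt_ofReal_iff (by positivity),
    show log 4 * (3 / 2 * (c * n)) = n * (log 4 * (3 / 2) * c) by ring, exp_nat_mul, ← mul_pow]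
  exact pow_lt_pow_left₀ hρ (by positivity) (by omega)

/-- Binomial approximation of `2X/3` is linearly bad: for `X ~ Bin(3n, 1/2)` and
`Y ~ Bin(2n, p)` with `p ∈ [0, 1]`, there is `C_p > 0` such that for all large `n`,
`W_∞(2X/3, Y) ≥ C_p · n`. -/
theorem binomial_approx_linearly_bad (p : ℝ) (hp : 0 ≤ p ∧ p ≤ 1) :
    ∃ C : ℝ, 0 < C ∧ ∃ N : ℕ, ∀ n : ℕ, N ≤ n →
      ENNReal.ofReal (C * n) ≤ wassersteinInf (lawTwoThirdsBin n) (lawBin n p) :=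
  binomial_approx_linearly_bad_general p
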